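/- Let I, J ⊆ [n] be nonempty and weakly separated with |I| ≥ |J|, and let J \ I = J′ ∪ J″ be a disjoint decomposition with J′ < (I \ J) < J″. Then (1) h(I, J) = |I ∩ J| + |J″| and (2) h(J, I) = |I ∩ J| + |J′|. Consequently c(I, J) = |J″| − |J′| = h(I, J) − h(J, I). -/

import Mathlib

/-- `allLt A B` means every element of `A` is smaller than every element of `B`
(vacuously true if `A` or `B` is empty). -/
def allLt (A B : Finset ℕ) : Prop := ∀ a ∈ A, ∀ b ∈ B, a < b

/-- Leclerc–Zelevinsky weak separation of two finite sets of integers. -/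
def WeaklySeparated (I J : Finset ℕ) : Prop :=
  (J.card ≤ I.card ∧ ∃ J' J'' : Finset ℕ, Disjoint J' J'' ∧ J' ∪ J'' = J \ I ∧
      allLt J' (I \ J) ∧ allLt (I \ J) J'') ∨
  (I.card ≤ J.card ∧ ∃ I' I'' : Finset ℕ, Disjoint I' I'' ∧ I' ∪ I'' = I \ J ∧
      allLt I' (J \ I) ∧ allLt (J \ I) I'')

/-- A collection of subsets is weakly separated if its members are pairwise weakly separated. -/
def WSColl (S : Set (Finset ℕ)) : Prop := ∀ I ∈ S, ∀ J ∈ S, WeaklySeparated I J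

/-- `S(I,d)`: the set of the `d` smallest elements of `I`. -/
def smallSet (I : Finset ℕ) (d : ℕ) : Finset ℕ := ((Finset.sort (r := (· ≤ ·)) I).take d).toFinset

/-- `E(I,d)`: the set of the `d` largest elements of `I`. -/
def largeSet (I : Finset ℕ) (d : ℕ) : Finset ℕ :=
  ((Finset.sort (r := (· ≤ ·)) I).drop (I.card - d)).toFinset

/-- `A ⪯ B`: the sets have the same cardinality `d` and for each `1 ≤ s ≤ d`
the `s`-th smallest element of `A` is at most the `s`-th smallest element of `B`. -/
def PrecLE (A B : Finset ℕ) : Prop :=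
  A.card = B.card ∧
  ∀ s < A.card, (Finset.sort (r := (· ≤ ·)) A).getD s 0 ≤ (Finset.sort (r := (· ≤ ·)) B).getD s 0

/-- `h(I,J) = max{ d : 0 ≤ d ≤ min(|I|,|J|) and S(I,d) ⪯ E(J,d) }`.
In the paper this equals `dim Hom_D(M_I, M_J)` for rank one modules over the
Auslander algebra `D` of `ℂ[t]/(tⁿ)`. -/
noncomputable def homDim (I J : Finset ℕ) : ℕ :=
  sSup {d | d ≤ min I.card J.card ∧ PrecLE (smallSet I d) (largeSet J d)}

section WSAuxLemmas
open Finset List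

/-- The `s`-th element of the sorted list of `X` is in `X`. -/
lemma ws_getD_mem (X : Finset ℕ) {s : ℕ} (hs : s < X.card) :
    (Finset.sort (r := (· ≤ ·)) X).getD s 0 ∈ X := by
  have hlen : s < (Finset.sort (r := (· ≤ ·)) X).length := by rwa [Finset.length_sort]
  rw [List.getD_eq_getElem _ _ hlen]
  exact (Finset.mem_sort (· ≤ ·)).1 (List.getElem_mem hlen)

lemma ws_getD_le_getD (X : Finset ℕ) {s s' : ℕ} (hss : s ≤ s') (hs' : s' < X.card) :
    (Finset.sort (r := (· ≤ ·)) X).getD s 0 ≤ (Finset.sort (r := (· ≤ ·)) X).getD s' 0 := by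
  have hlen' : s' < (Finset.sort (r := (· ≤ ·)) X).length := by rwa [Finset.length_sort]
  have hlen : s < (Finset.sort (r := (· ≤ ·)) X).length := lt_of_le_of_lt hss hlen'
  rw [List.getD_eq_getElem _ _ hlen, List.getD_eq_getElem _ _ hlen']
  exact (Finset.pairwise_sort X (· ≤ ·)).rel_get_of_le (a := ⟨s, hlen⟩) (b := ⟨s', hlen'⟩) hss

lemma ws_getD_lt_getD (X : Finset ℕ) {s s' : ℕ} (hss : s < s') (hs' : s' < X.card) :
    (Finset.sort (r := (· ≤ ·)) X).getD s 0 < (Finset.sort (r := (· ≤ ·)) X).getD s' 0 := by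
  have hlen' : s' < (Finset.sort (r := (· ≤ ·)) X).length := by rwa [Finset.length_sort]
  have hlen : s < (Finset.sort (r := (· ≤ ·)) X).length := lt_trans hss hlen'
  rw [List.getD_eq_getElem _ _ hlen, List.getD_eq_getElem _ _ hlen']
  exact (Finset.sortedLT_sort X) (show (⟨s, hlen⟩ : Fin _) < ⟨s', hlen'⟩ from hss)

/-- Key lemma: for a downward-closed predicate `p`, `p` holds at the `s`-th sorted element
iff `s < #(X.filter p)`. -/
lemma ws_getD_prop_iff (X : Finset ℕ) (p : ℕ → Prop) [DecidablePred p]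
    (hp : ∀ x y : ℕ, x ≤ y → p y → p x) {s : ℕ} (hs : s < X.card) :
    p ((Finset.sort (r := (· ≤ ·)) X).getD s 0) ↔ s < (X.filter p).card := by
  set L := Finset.sort (r := (· ≤ ·)) X with hL
  have hlen : s < L.length := by rwa [hL, Finset.length_sort]
  constructor
  · intro hps
    have h1 : (Finset.range (s + 1)).card ≤ (X.filter p).card := by
      apply Finset.card_le_card_of_injOn (fun i => L.getD i 0)
      · intro i hi
        rw [Finset.mem_coe, Finset.mem_range] at hi
        have hi' : i < X.card := lt_of_lt_of_le hi hs
        refine Finset.mem_filter.2 ⟨ws_getD_mem X hi', ?_⟩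
        exact hp _ _ (ws_getD_le_getD X (Nat.lt_succ_iff.1 hi) hs) hps
      · intro i hi j hj hij
        rw [Finset.coe_range, Set.mem_Iio] at hi hj
        by_contra hne
        rcases Nat.lt_or_ge i j with h | h
        · exact absurd hij (ne_of_lt (ws_getD_lt_getD X h (lt_of_lt_of_le hj hs)))
        · have : j < i := lt_of_le_of_ne h (Ne.symm hne)
          exact absurd hij.symm (ne_of_lt (ws_getD_lt_getD X this (lt_of_lt_of_le hi hs)))
    rwa [Finset.card_range, Nat.succ_le_iff] at h1
  · intro hcard
    by_contra hps
    have h1 : (X.filter p).card ≤ (Finset.range s).card := by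
      apply Finset.card_le_card_of_injOn (fun y => L.idxOf y)
      · intro y hy
        rw [Finset.mem_coe, Finset.mem_filter] at hy
        have hyL : y ∈ L := (Finset.mem_sort (· ≤ ·)).2 hy.1
        have hidx : L.idxOf y < L.length := List.idxOf_lt_length_iff.2 hyL
        rw [Finset.mem_coe, Finset.mem_range]
        by_contra hge
        push_neg at hge
        have : L.getD s 0 ≤ L[L.idxOf y] := by
          rw [List.getD_eq_getElem _ _ hlen]
          exact (Finset.pairwise_sort X (· ≤ ·)).rel_get_of_le
            (a := ⟨s, hlen⟩) (b := ⟨L.idxOf y, hidx⟩) hge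
        rw [List.getElem_idxOf hidx] at this
        exact hps (hp _ _ this hy.2)
      · intro y hy z hz hyz
        have hyL : y ∈ L := (Finset.mem_sort (· ≤ ·)).2 (Finset.mem_filter.1 (by exact_mod_cast hy)).1
        have hzL : z ∈ L := (Finset.mem_sort (· ≤ ·)).2 (Finset.mem_filter.1 (by exact_mod_cast hz)).1
        exact (List.idxOf_inj hyL).1 hyz
    rw [Finset.card_range] at h1
    omega

lemma ws_getD_le_iff (X : Finset ℕ) {s : ℕ} (hs : s < X.card) (t : ℕ) :
    (Finset.sort (r := (· ≤ ·)) X).getD s 0 ≤ t ↔ s < (X.filter (· ≤ t)).card :=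
  ws_getD_prop_iff X (· ≤ t) (fun _ _ hxy hy => le_trans hxy hy) hs

lemma ws_getD_lt_iff (X : Finset ℕ) {s : ℕ} (hs : s < X.card) (t : ℕ) :
    (Finset.sort (r := (· ≤ ·)) X).getD s 0 < t ↔ s < (X.filter (· < t)).card :=
  ws_getD_prop_iff X (· < t) (fun _ _ hxy hy => lt_of_le_of_lt hxy hy) hs

lemma ws_le_getD_iff (X : Finset ℕ) {s : ℕ} (hs : s < X.card) (t : ℕ) :
    t ≤ (Finset.sort (r := (· ≤ ·)) X).getD s 0 ↔ (X.filter (· < t)).card ≤ s := by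
  rw [← not_lt, ws_getD_lt_iff X hs t, not_lt]

/-- The number of elements `≤` the `s`-th sorted element is exactly `s+1`. -/
lemma ws_card_filter_le_getD (X : Finset ℕ) {s : ℕ} (hs : s < X.card) :
    (X.filter (· ≤ (Finset.sort (r := (· ≤ ·)) X).getD s 0)).card = s + 1 := by
  have h1 : s < (X.filter (· ≤ (Finset.sort (r := (· ≤ ·)) X).getD s 0)).card :=
    (ws_getD_le_iff X hs _).1 le_rfl
  rcases Nat.lt_or_ge (s + 1) X.card with h | h
  · have h2 : ¬ ((Finset.sort (r := (· ≤ ·)) X).getD (s+1) 0 ≤ (Finset.sort (r := (· ≤ ·)) X).getD s 0) :=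
      not_le.2 (ws_getD_lt_getD X (Nat.lt_succ_self s) h)
    rw [ws_getD_le_iff X h] at h2
    omega
  · have h2 : (X.filter (· ≤ (Finset.sort (r := (· ≤ ·)) X).getD s 0)).card ≤ X.card :=
      Finset.card_filter_le _ _
    omega

/-- The number of elements `<` the `s`-th sorted element is exactly `s`. -/
lemma ws_card_filter_lt_getD (X : Finset ℕ) {s : ℕ} (hs : s < X.card) :
    (X.filter (· < (Finset.sort (r := (· ≤ ·)) X).getD s 0)).card = s := by
  have h1 : (X.filter (· < (Finset.sort (r := (· ≤ ·)) X).getD s 0)).card ≤ s := by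
    rw [← ws_le_getD_iff X hs]
  rcases Nat.eq_zero_or_pos s with rfl | hpos
  · omega
  · have h2 : (Finset.sort (r := (· ≤ ·)) X).getD (s-1) 0 < (Finset.sort (r := (· ≤ ·)) X).getD s 0 :=
      ws_getD_lt_getD X (by omega) hs
    rw [ws_getD_lt_iff X (by omega)] at h2
    omega
lemma ws_sort_smallSet (X : Finset ℕ) (d : ℕ) :
    Finset.sort (r := (· ≤ ·)) (smallSet X d) = (Finset.sort (r := (· ≤ ·)) X).take d := by
  have hnd : ((Finset.sort (r := (· ≤ ·)) X).take d).Nodup :=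
    (List.take_sublist d _).nodup (Finset.sort_nodup X (· ≤ ·))
  exact (List.toFinset_sort (· ≤ ·) hnd).2
    (((Finset.pairwise_sort X (· ≤ ·)).sublist (List.take_sublist d _)))

lemma ws_sort_largeSet (X : Finset ℕ) (d : ℕ) :
    Finset.sort (r := (· ≤ ·)) (largeSet X d) = (Finset.sort (r := (· ≤ ·)) X).drop (X.card - d) := by
  have hnd : ((Finset.sort (r := (· ≤ ·)) X).drop (X.card - d)).Nodup :=
    (List.drop_sublist _ _).nodup (Finset.sort_nodup X (· ≤ ·))
  exact (List.toFinset_sort (· ≤ ·) hnd).2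
    (((Finset.pairwise_sort X (· ≤ ·)).sublist (List.drop_sublist _ _)))

lemma ws_card_smallSet (X : Finset ℕ) {d : ℕ} (hd : d ≤ X.card) :
    (smallSet X d).card = d := by
  rw [smallSet, List.toFinset_card_of_nodup
    ((List.take_sublist d _).nodup (Finset.sort_nodup X (· ≤ ·))),
    List.length_take, Finset.length_sort]
  omega

lemma ws_card_largeSet (X : Finset ℕ) {d : ℕ} (hd : d ≤ X.card) :
    (largeSet X d).card = d := by
  rw [largeSet, List.toFinset_card_of_nodup
    ((List.drop_sublist _ _).nodup (Finset.sort_nodup X (· ≤ ·))),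
    List.length_drop, Finset.length_sort]
  omega

lemma ws_precLE_iff (X Y : Finset ℕ) {d : ℕ} (hdX : d ≤ X.card) (hdY : d ≤ Y.card) :
    PrecLE (smallSet X d) (largeSet Y d) ↔
      ∀ s < d, (Finset.sort (r := (· ≤ ·)) X).getD s 0 ≤
        (Finset.sort (r := (· ≤ ·)) Y).getD (Y.card - d + s) 0 := by
  rw [PrecLE, ws_card_smallSet X hdX, ws_card_largeSet Y hdY,
    ws_sort_smallSet, ws_sort_largeSet]
  constructor
  · rintro ⟨-, h⟩ s hs
    have := h s hs
    have h1 : s < ((Finset.sort (r := (· ≤ ·)) X).take d).length := by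
      rw [List.length_take, Finset.length_sort]; omega
    have h2 : s < ((Finset.sort (r := (· ≤ ·)) Y).drop (Y.card - d)).length := by
      rw [List.length_drop, Finset.length_sort]; omega
    have h3 : Y.card - d + s < (Finset.sort (r := (· ≤ ·)) Y).length := by
      rw [Finset.length_sort]; omega
    have h4 : s < (Finset.sort (r := (· ≤ ·)) X).length := by rw [Finset.length_sort]; omega
    rwa [List.getD_eq_getElem _ _ h1, List.getD_eq_getElem _ _ h2,
      List.getElem_take, List.getElem_drop, ← List.getD_eq_getElem _ 0 h4,
      ← List.getD_eq_getElem _ 0 h3] at this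
  · intro h
    refine ⟨rfl, fun s hs => ?_⟩
    have := h s hs
    have h1 : s < ((Finset.sort (r := (· ≤ ·)) X).take d).length := by
      rw [List.length_take, Finset.length_sort]; omega
    have h2 : s < ((Finset.sort (r := (· ≤ ·)) Y).drop (Y.card - d)).length := by
      rw [List.length_drop, Finset.length_sort]; omega
    have h3 : Y.card - d + s < (Finset.sort (r := (· ≤ ·)) Y).length := by
      rw [Finset.length_sort]; omega
    have h4 : s < (Finset.sort (r := (· ≤ ·)) X).length := by rw [Finset.length_sort]; omega
    rwa [List.getD_eq_getElem _ _ h1, List.getD_eq_getElem _ _ h2,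
      List.getElem_take, List.getElem_drop, ← List.getD_eq_getElem _ 0 h4,
      ← List.getD_eq_getElem _ 0 h3]

lemma ws_card_filter_union {A B : Finset ℕ} (h : Disjoint A B) (p : ℕ → Prop) [DecidablePred p] :
    ((A ∪ B).filter p).card = (A.filter p).card + (B.filter p).card := by
  rw [Finset.filter_union,
    Finset.card_union_of_disjoint (h.mono (Finset.filter_subset _ _) (Finset.filter_subset _ _))]

end WSAuxLemmas

/-- **Hom dimensions for weakly separated sets** (and the quasi-commutation exponent).
Let `I, J ⊆ [n]` be nonempty with `|I| ≥ |J|` and let `J \ I = J′ ∪ J″` be a disjoint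
decomposition with `J′ < (I \ J) < J″`.  Then `h(I,J) = |I∩J| + |J″|`,
`h(J,I) = |I∩J| + |J′|`, and consequently
`c(I,J) = |J″| − |J′| = h(I,J) − h(J,I)`. -/
theorem homDim_of_weakly_separated (n : ℕ) (I J : Finset ℕ)
    (hI : I ⊆ Finset.Icc 1 n) (hJ : J ⊆ Finset.Icc 1 n)
    (hI0 : I.Nonempty) (hJ0 : J.Nonempty) (hcard : J.card ≤ I.card)
    (J' J'' : Finset ℕ) (hdisj : Disjoint J' J'') (hunion : J' ∪ J'' = J \ I)
    (hlow : allLt J' (I \ J)) (hhigh : allLt (I \ J) J'') :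
    homDim I J = (I ∩ J).card + J''.card ∧
    homDim J I = (I ∩ J).card + J'.card ∧
    (J''.card : ℤ) - (J'.card : ℤ) = (homDim I J : ℤ) - (homDim J I : ℤ) := by
  classical
  -- cardinalities
  have hJcard : J.card = (I ∩ J).card + J'.card + J''.card := by
    have h1 : (J \ I).card = J'.card + J''.card := by
      rw [← hunion, Finset.card_union_of_disjoint hdisj]
    have h2 : (J ∩ I).card + (J \ I).card = J.card := Finset.card_inter_add_card_sdiff J I
    rw [Finset.inter_comm] at h2
    omega
  have hIcard : I.card = (I ∩ J).card + (I \ J).card :=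
    (Finset.card_inter_add_card_sdiff I J).symm
  have hm : J'.card + J''.card ≤ (I \ J).card := by omega
  -- decompositions of I and J as disjoint unions
  have hJeq : (I ∩ J) ∪ (J' ∪ J'') = J := by
    rw [hunion, Finset.inter_comm, Finset.union_comm, Finset.sdiff_union_inter]
  have hIeq : (I ∩ J) ∪ (I \ J) = I := by
    rw [Finset.union_comm, Finset.sdiff_union_inter]
  have hdJ1 : Disjoint (I ∩ J) (J' ∪ J'') := by
    rw [hunion]
    exact Finset.disjoint_left.2 fun x hx hx' =>
      (Finset.mem_sdiff.1 hx').2 (Finset.mem_inter.1 hx).1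
  have hdI1 : Disjoint (I ∩ J) (I \ J) := by
    exact Finset.disjoint_left.2 fun x hx hx' =>
      (Finset.mem_sdiff.1 hx').2 (Finset.mem_inter.1 hx).2
  -- count splitting, ≤ and < versions
  have hJsplit : ∀ t : ℕ, (J.filter (· ≤ t)).card =
      ((I ∩ J).filter (· ≤ t)).card + ((J'.filter (· ≤ t)).card + (J''.filter (· ≤ t)).card) := by
    intro t
    have he : J.filter (· ≤ t) = ((I ∩ J) ∪ (J' ∪ J'')).filter (· ≤ t) := by rw [hJeq]
    rw [he, ws_card_filter_union hdJ1, ws_card_filter_union hdisj]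
  have hJsplitLt : ∀ t : ℕ, (J.filter (· < t)).card =
      ((I ∩ J).filter (· < t)).card + ((J'.filter (· < t)).card + (J''.filter (· < t)).card) := by
    intro t
    have he : J.filter (· < t) = ((I ∩ J) ∪ (J' ∪ J'')).filter (· < t) := by rw [hJeq]
    rw [he, ws_card_filter_union hdJ1, ws_card_filter_union hdisj]
  have hIsplit : ∀ t : ℕ, (I.filter (· ≤ t)).card =
      ((I ∩ J).filter (· ≤ t)).card + ((I \ J).filter (· ≤ t)).card := by
    intro t
    have he : I.filter (· ≤ t) = ((I ∩ J) ∪ (I \ J)).filter (· ≤ t) := by rw [hIeq]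
    rw [he, ws_card_filter_union hdI1]
  have hIsplitLt : ∀ t : ℕ, (I.filter (· < t)).card =
      ((I ∩ J).filter (· < t)).card + ((I \ J).filter (· < t)).card := by
    intro t
    have he : I.filter (· < t) = ((I ∩ J) ∪ (I \ J)).filter (· < t) := by rw [hIeq]
    rw [he, ws_card_filter_union hdI1]
  have hminIJ : min I.card J.card = J.card := min_eq_right hcard
  have hminJI : min J.card I.card = J.card := min_eq_left hcard
  -- Claim 1
  have hIJset : {d | d ≤ min I.card J.card ∧ PrecLE (smallSet I d) (largeSet J d)}
      = Set.Iic ((I ∩ J).card + J''.card) := by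
    ext d
    simp only [Set.mem_setOf_eq, Set.mem_Iic, hminIJ]
    constructor
    · rintro ⟨hd, hp⟩
      rw [ws_precLE_iff I J (le_trans hd hcard) hd] at hp
      by_contra hgt
      push_neg at hgt
      have ha : 1 ≤ J'.card := by omega
      have hm1 : 1 ≤ (I \ J).card := by omega
      have hJ'ne : J'.Nonempty := Finset.card_pos.1 ha
      obtain ⟨x0, hx0⟩ : (I \ J).Nonempty := Finset.card_pos.1 hm1
      set t := J'.max' hJ'ne with ht
      have htJ' : t ∈ J' := J'.max'_mem hJ'ne
      have hcJ' : (J'.filter (· ≤ t)).card = J'.card := by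
        rw [Finset.filter_true_of_mem fun y hy => J'.le_max' y hy]
      have hcJ'' : (J''.filter (· ≤ t)).card = 0 := by
        rw [Finset.card_eq_zero]
        exact Finset.filter_false_of_mem fun z hz => by
          have h1 : t < x0 := hlow t htJ' x0 hx0
          have h2 : x0 < z := hhigh x0 hx0 z hz
          omega
      have hcImJ : ((I \ J).filter (· ≤ t)).card = 0 := by
        rw [Finset.card_eq_zero]
        exact Finset.filter_false_of_mem fun x hx => by
          have h1 : t < x := hlow t htJ' x hx
          omega
      have hcIJle : ((I ∩ J).filter (· ≤ t)).card ≤ (I ∩ J).card := Finset.card_filter_le _ _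
      have hcJt := hJsplit t
      have hcIt := hIsplit t
      have hsc : ((I ∩ J).filter (· ≤ t)).card < d := by omega
      have hstep := hp _ hsc
      have hidx : J.card - d + ((I ∩ J).filter (· ≤ t)).card < J.card := by omega
      have h5 : (Finset.sort (r := (· ≤ ·)) J).getD
          (J.card - d + ((I ∩ J).filter (· ≤ t)).card) 0 ≤ t := by
        rw [ws_getD_le_iff J hidx t]
        omega
      have h6 : (Finset.sort (r := (· ≤ ·)) I).getD ((I ∩ J).filter (· ≤ t)).card 0 ≤ t :=
        le_trans hstep h5
      rw [ws_getD_le_iff I (show ((I ∩ J).filter (· ≤ t)).card < I.card by omega) t] at h6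
      omega
    · intro hd
      have hdJ : d ≤ J.card := by omega
      refine ⟨hdJ, ?_⟩
      rw [ws_precLE_iff I J (le_trans hdJ hcard) hdJ]
      intro s hs
      have hjlt : J.card - d + s < J.card := by omega
      set t := (Finset.sort (r := (· ≤ ·)) J).getD (J.card - d + s) 0 with ht
      have hcJt : (J.filter (· ≤ t)).card = J.card - d + s + 1 := ws_card_filter_le_getD J hjlt
      have hsI : s < I.card := by omega
      rw [ws_getD_le_iff I hsI t]
      have hsplt := hJsplit t
      have hIsplt := hIsplit t
      have hb1 : (J'.filter (· ≤ t)).card ≤ J'.card := Finset.card_filter_le _ _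
      have hb2 : (J''.filter (· ≤ t)).card ≤ J''.card := Finset.card_filter_le _ _
      rcases Nat.eq_zero_or_pos ((J''.filter (· ≤ t)).card) with h0 | hpos
      · omega
      · obtain ⟨z, hz⟩ := Finset.card_pos.1 hpos
        rw [Finset.mem_filter] at hz
        have hall : ((I \ J).filter (· ≤ t)).card = (I \ J).card := by
          rw [Finset.filter_true_of_mem fun x hx => by
            have := hhigh x hx z hz.1
            have := hz.2
            omega]
        omega
  -- Claim 2
  have hJIset : {d | d ≤ min J.card I.card ∧ PrecLE (smallSet J d) (largeSet I d)}
      = Set.Iic ((I ∩ J).card + J'.card) := by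
    ext d
    simp only [Set.mem_setOf_eq, Set.mem_Iic, hminJI]
    constructor
    · rintro ⟨hd, hp⟩
      rw [ws_precLE_iff J I hd (le_trans hd hcard)] at hp
      by_contra hgt
      push_neg at hgt
      have hb : 1 ≤ J''.card := by omega
      have hm1 : 1 ≤ (I \ J).card := by omega
      have hJ''ne : J''.Nonempty := Finset.card_pos.1 hb
      obtain ⟨x0, hx0⟩ : (I \ J).Nonempty := Finset.card_pos.1 hm1
      set t := J''.min' hJ''ne with ht
      have htJ'' : t ∈ J'' := J''.min'_mem hJ''ne
      have hcJ'' : (J''.filter (· < t)).card = 0 := by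
        rw [Finset.card_eq_zero]
        exact Finset.filter_false_of_mem fun z hz => by
          have := J''.min'_le z hz
          omega
      have hcImJ : ((I \ J).filter (· < t)).card = (I \ J).card := by
        rw [Finset.filter_true_of_mem fun x hx => hhigh x hx t htJ'']
      have hcJ' : (J'.filter (· < t)).card = J'.card := by
        rw [Finset.filter_true_of_mem fun y hy => by
          have h1 : y < x0 := hlow y hy x0 hx0
          have h2 : x0 < t := hhigh x0 hx0 t htJ''
          omega]
      have hcIJle : ((I ∩ J).filter (· < t)).card ≤ (I ∩ J).card := Finset.card_filter_le _ _
      have hcJt := hJsplitLt t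
      have hcIt := hIsplitLt t
      have hsJ : J'.card + ((I ∩ J).filter (· < t)).card < J.card := by omega
      have h7 : t ≤ (Finset.sort (r := (· ≤ ·)) J).getD
          (J'.card + ((I ∩ J).filter (· < t)).card) 0 := by
        rw [ws_le_getD_iff J hsJ t]
        omega
      have hsd : J'.card + ((I ∩ J).filter (· < t)).card < d := by omega
      have h8 := hp _ hsd
      have hidx : I.card - d + (J'.card + ((I ∩ J).filter (· < t)).card) < I.card := by omega
      have h9 : (Finset.sort (r := (· ≤ ·)) I).getD
          (I.card - d + (J'.card + ((I ∩ J).filter (· < t)).card)) 0 < t := by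
        rw [ws_getD_lt_iff I hidx t]
        omega
      omega
    · intro hd
      have hdJ : d ≤ J.card := by omega
      refine ⟨hdJ, ?_⟩
      rw [ws_precLE_iff J I hdJ (le_trans hdJ hcard)]
      intro s hs
      have hsJ : s < J.card := by omega
      set t := (Finset.sort (r := (· ≤ ·)) J).getD s 0 with ht
      have hcJt : (J.filter (· < t)).card = s := ws_card_filter_lt_getD J hsJ
      have hidx : I.card - d + s < I.card := by omega
      rw [ws_le_getD_iff I hidx t]
      have hsplt := hJsplitLt t
      have hIsplt := hIsplitLt t
      have hb1 : (J'.filter (· < t)).card ≤ J'.card := Finset.card_filter_le _ _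
      have hb3 : ((I \ J).filter (· < t)).card ≤ (I \ J).card := Finset.card_filter_le _ _
      rcases Nat.eq_zero_or_pos (((I \ J).filter (· < t)).card) with h0 | hpos
      · omega
      · obtain ⟨x, hx⟩ := Finset.card_pos.1 hpos
        rw [Finset.mem_filter] at hx
        have hallJ' : (J'.filter (· < t)).card = J'.card := by
          rw [Finset.filter_true_of_mem fun y hy => by
            have := hlow y hy x hx.1
            have := hx.2
            omega]
        omega
  have h1 : homDim I J = (I ∩ J).card + J''.card := by
    rw [homDim, hIJset]
    exact csSup_Iic
  have h2 : homDim J I = (I ∩ J).card + J'.card := by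
    rw [homDim, hJIset]
    exact csSup_Iic
  refine ⟨h1, h2, ?_⟩
  rw [h1, h2]
  push_cast
  ring
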